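/- Let f : (0,∞) → ℝ be defined by f(t) = sin(π√t)/(π√t). Then for every integer k ≥ 0 and every real t > 0, the k-th derivative of f satisfies f^{(k)}(t) = (-1)^k · k! · t^{-k} · [ P_k(π²t)·cos(π√t) + Q_k(π²t)·f(t) ], where P_k and Q_k are the polynomials P_k(x) = −Σ_{j=0}^{⌊(k-1)/2⌋} (-4x)^j / (2^{2k-1}·(2j+1)!) · C(2k-2j-1,k) and Q_k(x) = Σ_{j=0}^{⌊k/2⌋} (-4x)^j / (2^{2k}·(2j)!) · C(2k-2j,k), with C(a,b) the binomial coefficient. -/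

import Mathlib

open Finset Real

/-- `f t = sin(π√t)/(π√t)`. -/
noncomputable def f (t : ℝ) : ℝ := Real.sin (π * Real.sqrt t) / (π * Real.sqrt t)

/-- The polynomial `P_k(x) = -∑_{j=0}^{⌊(k-1)/2⌋} (-4x)^j / (2^{2k-1} (2j+1)!) · C(2k-2j-1, k)`,
evaluated at a real `x`.  (The sum has `⌊(k+1)/2⌋` terms; it is empty for `k = 0`.) -/
noncomputable def P (k : ℕ) (x : ℝ) : ℝ :=
  -∑ j ∈ Finset.range ((k + 1) / 2),
    (-4 * x) ^ j / (2 ^ (2 * k - 1) * (Nat.factorial (2 * j + 1)))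
      * (Nat.choose (2 * k - 2 * j - 1) k)

/-- The polynomial `Q_k(x) = ∑_{j=0}^{⌊k/2⌋} (-4x)^j / (2^{2k} (2j)!) · C(2k-2j, k)`,
evaluated at a real `x`. -/
noncomputable def Q (k : ℕ) (x : ℝ) : ℝ :=
  ∑ j ∈ Finset.range (k / 2 + 1),
    (-4 * x) ^ j / (2 ^ (2 * k) * (Nat.factorial (2 * j)))
      * (Nat.choose (2 * k - 2 * j) k)

/-!
With `c t = cos (π √t)` one has `c' = -(π²/2) f` and `f' = (c - f) / (2t)`, so differentiating
`p(π²t) c + q(π²t) f` for polynomials `p, q` gives `t⁻¹` times an expression of the same shape.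
The formula follows by induction on `k` once `P` and `Q` satisfy
`(k+1) P_{k+1} = k P_k - x P_k' - Q_k / 2` and `(k+1) Q_{k+1} = (k + 1/2) Q_k - x Q_k' + x P_k / 2`.
Coefficientwise, both recurrences are instances of the binomial identity
`(k+1) C(n+2, k+1) = 2(n+1) C(n, k) + (2k - n) C(n+1, k)`.
-/

open scoped Nat
open Polynomial

theorem add_one_mul_choose_add_two {R : Type*} [CommRing R] (n k : ℕ) :
    ((k : R) + 1) * (n + 2).choose (k + 1)
      = 2 * ((n : R) + 1) * n.choose k + (2 * k - n) * (n + 1).choose k := by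
  rcases le_or_gt k (n + 1) with hk | hk
  · have h₁ := congrArg (Nat.cast (R := R)) (Nat.add_one_mul_choose_eq (n + 1) k)
    have h₂ := congrArg (Nat.cast (R := R)) (Nat.choose_mul_succ_eq n k)
    push_cast [Nat.cast_sub hk] at h₁ h₂
    linear_combination -h₁ - 2 * h₂
  · simp [Nat.choose_eq_zero_of_lt, hk, show n < k by omega, show n + 2 < k + 1 by omega]

noncomputable def pCoeff (k j : ℕ) : ℝ :=
  if 2 * j < k then
    -((-4) ^ j / (2 ^ (2 * k - 1) * (Nat.factorial (2 * j + 1)))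
      * (Nat.choose (2 * k - 2 * j - 1) k))
  else 0

noncomputable def qCoeff (k j : ℕ) : ℝ :=
  if 2 * j ≤ k then
    (-4) ^ j / (2 ^ (2 * k) * (Nat.factorial (2 * j))) * (Nat.choose (2 * k - 2 * j) k)
  else 0

theorem pCoeff_eq_zero {k j : ℕ} (h : k ≤ 2 * j) : pCoeff k j = 0 := if_neg (by omega)

theorem qCoeff_eq_zero {k j : ℕ} (h : k < 2 * j) : qCoeff k j = 0 := if_neg (by omega)

theorem pCoeff_succ (k j : ℕ) :
    ((k : ℝ) + 1) * pCoeff (k + 1) j = ((k : ℝ) - j) * pCoeff k j - qCoeff k j / 2 := by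
  unfold pCoeff qCoeff
  rcases lt_trichotomy (2 * j) k with h | rfl | h
  · -- Naming the truncated differences turns the binomials into `C(n+2, k+1)`, `C(n, k)`,
    -- `C(n+1, k)`, as in `add_one_mul_choose_add_two`.
    obtain ⟨n, hn⟩ : ∃ n, 2 * k - 2 * j - 1 = n := ⟨_, rfl⟩
    obtain ⟨e, he⟩ : ∃ e, 2 * k - 1 = e := ⟨_, rfl⟩
    have hn_cast : (n : ℝ) = 2 * k - 2 * j - 1 := by
      rw [← hn, Nat.cast_sub (by omega), Nat.cast_sub (by omega)]; push_cast; ring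
    rw [if_pos (by omega), if_pos h, if_pos h.le, show 2 * (k + 1) - 2 * j - 1 = n + 2 by omega, hn,
      show 2 * k - 2 * j = n + 1 by omega, show 2 * (k + 1) - 1 = e + 2 by omega,
      he, show 2 * k = e + 1 by omega, Nat.factorial_succ]
    have key := add_one_mul_choose_add_two (R := ℝ) n k
    rw [hn_cast] at key
    push_cast
    field_simp
    linear_combination -2 ^ (2 * e + 2) * key
  · rw [if_pos (by omega), if_neg (lt_irrefl _), if_pos le_rfl,
      show 2 * (2 * j + 1) - 2 * j - 1 = 2 * j + 1 by omega,
      show 2 * (2 * j) - 2 * j = 2 * j by omega,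
      show 2 * (2 * j + 1) - 1 = 2 * (2 * j) + 1 by omega, Nat.choose_self, Nat.choose_self,
      Nat.factorial_succ, pow_succ]
    push_cast
    field_simp
    ring
  · rw [if_neg (by omega), if_neg (by omega), if_neg (by omega)]
    ring

theorem qCoeff_succ_zero (k : ℕ) :
    ((k : ℝ) + 1) * qCoeff (k + 1) 0 = ((k : ℝ) + 1 / 2) * qCoeff k 0 := by
  unfold qCoeff
  rw [if_pos (by omega), if_pos (by omega), show 2 * (k + 1) - 2 * 0 = 2 * k + 2 by omega,
    show 2 * k - 2 * 0 = 2 * k by omega, show 2 * (k + 1) = 2 * k + 2 by omega]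
  have key := add_one_mul_choose_add_two (R := ℝ) (2 * k) k
  push_cast at key ⊢
  field_simp
  linear_combination 2 * 2 ^ (2 * k) * key

theorem qCoeff_succ_succ (k j : ℕ) :
    ((k : ℝ) + 1) * qCoeff (k + 1) (j + 1)
      = ((k : ℝ) - 1 / 2 - j) * qCoeff k (j + 1) + pCoeff k j / 2 := by
  unfold pCoeff qCoeff
  rcases lt_trichotomy (2 * j + 1) k with h | rfl | h
  · obtain ⟨n, hn⟩ : ∃ n, 2 * k - 2 * (j + 1) = n := ⟨_, rfl⟩
    obtain ⟨e, he⟩ : ∃ e, 2 * k - 1 = e := ⟨_, rfl⟩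
    have hn_cast : (n : ℝ) = 2 * k - 2 * j - 2 := by
      rw [← hn, Nat.cast_sub (by omega)]; push_cast; ring
    rw [if_pos (by omega), if_pos (by omega), if_pos (by omega),
      show 2 * (k + 1) - 2 * (j + 1) = n + 2 by omega, hn, show 2 * k - 2 * j - 1 = n + 1 by omega,
      show 2 * (k + 1) = e + 3 by omega, he, show 2 * k = e + 1 by omega,
      show 2 * (j + 1) = 2 * j + 1 + 1 by ring, Nat.factorial_succ (2 * j + 1)]
    have key := add_one_mul_choose_add_two (R := ℝ) n k
    rw [hn_cast] at key
    push_cast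
    field_simp
    linear_combination (-4) ^ (j + 1) * 2 ^ (2 * e + 2) * key
  · rw [if_pos (by omega), if_neg (by omega), if_pos (by omega),
      show 2 * (2 * j + 1 + 1) - 2 * (j + 1) = 2 * j + 2 by omega,
      show 2 * (2 * j + 1) - 2 * j - 1 = 2 * j + 1 by omega,
      show 2 * (2 * j + 1 + 1) = 2 * (2 * j + 1) - 1 + 3 by omega,
      show 2 * (j + 1) = 2 * j + 1 + 1 by ring, Nat.choose_self, Nat.choose_self,
      Nat.factorial_succ (2 * j + 1), pow_add]
    push_cast
    field_simp
    ring
  · rw [if_neg (by omega), if_neg (by omega), if_neg (by omega)]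
    ring

noncomputable def pPoly (k : ℕ) : ℝ[X] := ∑ j ∈ range ((k + 1) / 2), monomial j (pCoeff k j)

noncomputable def qPoly (k : ℕ) : ℝ[X] := ∑ j ∈ range (k / 2 + 1), monomial j (qCoeff k j)

theorem coeff_pPoly (k j : ℕ) : (pPoly k).coeff j = pCoeff k j := by
  simp only [pPoly, finsetSum_coeff, coeff_monomial, sum_ite_eq', Finset.mem_range]
  split_ifs with h
  · rfl
  · exact (pCoeff_eq_zero (by omega)).symm

theorem coeff_qPoly (k j : ℕ) : (qPoly k).coeff j = qCoeff k j := by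
  simp only [qPoly, finsetSum_coeff, coeff_monomial, sum_ite_eq', Finset.mem_range]
  split_ifs with h
  · rfl
  · exact (qCoeff_eq_zero (by omega)).symm

theorem eval_pPoly (k : ℕ) (x : ℝ) : (pPoly k).eval x = P k x := by
  simp only [pPoly, eval_finsetSum, eval_monomial, P, ← sum_neg_distrib]
  refine sum_congr rfl fun j hj => ?_
  rw [pCoeff, if_pos (by rw [Finset.mem_range] at hj; omega), mul_pow]
  ring

theorem eval_qPoly (k : ℕ) (x : ℝ) : (qPoly k).eval x = Q k x := by
  simp only [qPoly, eval_finsetSum, eval_monomial, Q]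
  refine sum_congr rfl fun j hj => ?_
  rw [qCoeff, if_pos (by rw [Finset.mem_range] at hj; omega), mul_pow]
  ring

theorem Polynomial.coeff_X_mul_derivative {R : Type*} [Semiring R] (p : R[X]) (n : ℕ) :
    (X * derivative p).coeff n = n * p.coeff n := by
  cases n with
  | zero => simp
  | succ n => rw [coeff_X_mul, coeff_derivative, Nat.cast_comm]; push_cast; rfl

theorem pPoly_succ (k : ℕ) :
    C ((k : ℝ) + 1) * pPoly (k + 1)
      = C (k : ℝ) * pPoly k - X * derivative (pPoly k) - C (1 / 2) * qPoly k := by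
  ext j
  simp only [coeff_sub, coeff_C_mul, coeff_X_mul_derivative, coeff_pPoly, coeff_qPoly]
  linear_combination pCoeff_succ k j

theorem qPoly_succ (k : ℕ) :
    C ((k : ℝ) + 1) * qPoly (k + 1)
      = C ((k : ℝ) + 1 / 2) * qPoly k - X * derivative (qPoly k) + C (1 / 2) * (X * pPoly k) := by
  ext j
  cases j with
  | zero =>
    simp only [coeff_add, coeff_sub, coeff_C_mul, coeff_X_mul_zero, coeff_qPoly]
    linear_combination qCoeff_succ_zero k
  | succ j =>
    simp only [coeff_add, coeff_sub, coeff_C_mul, coeff_X_mul_derivative]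
    simp only [coeff_X_mul, coeff_pPoly, coeff_qPoly]
    push_cast
    linear_combination qCoeff_succ_succ k j

section Derivatives

variable {t : ℝ}

theorem hasDerivAt_pi_mul_sqrt (ht : 0 < t) :
    HasDerivAt (fun u => π * √u) (π / (2 * √t)) t := by
  refine ((hasDerivAt_sqrt ht.ne').const_mul π).congr_deriv ?_
  field_simp

theorem hasDerivAt_cos_pi_mul_sqrt (ht : 0 < t) :
    HasDerivAt (fun u => cos (π * √u)) (-(π ^ 2 / 2) * f t) t := by
  refine ((hasDerivAt_cos _).comp t (hasDerivAt_pi_mul_sqrt ht)).congr_deriv ?_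
  have : √t ≠ 0 := (sqrt_pos.2 ht).ne'
  simp only [f]
  field_simp

theorem hasDerivAt_f (ht : 0 < t) : HasDerivAt f ((cos (π * √t) - f t) / (2 * t)) t := by
  have hs : 0 < √t := sqrt_pos.2 ht
  have hu := hasDerivAt_pi_mul_sqrt ht
  refine (((hasDerivAt_sin _).comp t hu).div hu (by positivity)).congr_deriv ?_
  simp only [f, Function.comp_apply]
  field_simp
  rw [sq_sqrt ht.le]
  ring

noncomputable def bracket (k : ℕ) (t : ℝ) : ℝ :=
  (pPoly k).eval (π ^ 2 * t) * cos (π * √t) + (qPoly k).eval (π ^ 2 * t) * f t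

theorem hasDerivAt_bracket (k : ℕ) (ht : 0 < t) :
    HasDerivAt (bracket k) ((k * bracket k t - (k + 1) * bracket (k + 1) t) / t) t := by
  have hx : HasDerivAt (fun u => π ^ 2 * u) (π ^ 2) t := by
    simpa using (hasDerivAt_id t).const_mul (π ^ 2)
  have hp := ((pPoly k).hasDerivAt (π ^ 2 * t)).comp t hx
  have hq := ((qPoly k).hasDerivAt (π ^ 2 * t)).comp t hx
  refine ((hp.mul (hasDerivAt_cos_pi_mul_sqrt ht)).add
    (hq.mul (hasDerivAt_f ht))).congr_deriv ?_
  have hP := congrArg (eval (π ^ 2 * t)) (pPoly_succ k)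
  have hQ := congrArg (eval (π ^ 2 * t)) (qPoly_succ k)
  simp only [eval_mul, eval_sub, eval_add, eval_C, eval_X] at hP hQ
  simp only [bracket, Function.comp_apply]
  field_simp
  linear_combination 2 * cos (π * √t) * hP + 2 * f t * hQ

theorem hasDerivAt_zpow_mul_bracket (k : ℕ) (ht : 0 < t) :
    HasDerivAt (fun u => (-1) ^ k * k ! * u ^ (-(k : ℤ)) * bracket k u)
      ((-1) ^ (k + 1) * (k + 1)! * t ^ (-((k + 1 : ℕ) : ℤ)) * bracket (k + 1) t) t := by
  refine ((((hasDerivAt_zpow (-(k : ℤ)) t (Or.inl ht.ne')).const_mul ((-1 : ℝ) ^ k * k !)).mul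
    (hasDerivAt_bracket k ht))).congr_deriv ?_
  rw [show -((k + 1 : ℕ) : ℤ) = -(k : ℤ) - 1 by push_cast; ring, zpow_sub_one₀ ht.ne',
    Nat.factorial_succ]
  push_cast
  field_simp
  ring

end Derivatives

theorem iteratedDeriv_f_eqOn (k : ℕ) :
    Set.EqOn (iteratedDeriv k f) (fun t => (-1) ^ k * k ! * t ^ (-(k : ℤ)) * bracket k t)
      (Set.Ioi 0) := by
  induction k with
  | zero =>
    intro t _
    simp [bracket, eval_pPoly, eval_qPoly, P, Q]
  | succ k ih =>
    intro t ht
    rw [iteratedDeriv_succ, (ih.eventuallyEq_of_mem (Ioi_mem_nhds ht)).deriv_eq]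
    exact (hasDerivAt_zpow_mul_bracket k ht).deriv

theorem iteratedDeriv_f (k : ℕ) (t : ℝ) (ht : 0 < t) :
    iteratedDeriv k f t
      = (-1 : ℝ) ^ k * (Nat.factorial k) * t ^ (-(k : ℤ))
          * (P k (π ^ 2 * t) * Real.cos (π * Real.sqrt t) + Q k (π ^ 2 * t) * f t) := by
  rw [iteratedDeriv_f_eqOn k ht]
  simp only [bracket, eval_pPoly, eval_qPoly]
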